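/- arXiv:2210.10215 — 2 statements merged into one kernel-verified Lean document; each statement's English description precedes it below -/
import Mathlib

section
/- Let f_e(t,q) := Σ_{x ∈ ℕ^e} t^{n_e(x)} q^{W_e(x)} ∈ ℤ[[t,q]] for e ≥ 1. Then for every d ≥ 2, the recurrence f_d(t,q) = (1 − t)^{−1} · f_{d−1}(tq, q) holds in ℤ[[t,q]], where f_{d−1}(tq,q) denotes the power series obtained from f_{d−1}(t,q) by substituting t ↦ tq. -/
namespace Spiral

/-- The size `n(x) = n₁ + ⋯ + n_d` of a configuration `x ∈ ℕ^d`. -/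
def size {d : ℕ} (x : Fin d → ℕ) : ℕ := ∑ i, x i

/-- The weight `W(x) = Σ_{i<j} (max(0, x_j − x_i) + max(0, x_i − x_j − 1))`
(truncated ℕ-subtraction realizes the `max(0,·)`). -/
def weight {d : ℕ} (x : Fin d → ℕ) : ℕ :=
  ∑ i : Fin d, ∑ j : Fin d, if i < j then (x j - x i) + (x i - x j - 1) else 0

end Spiral

namespace Spiral

/-- The generating series `f_e(t,q) = Σ_{x ∈ ℕ^e} t^{n_e(x)} q^{W_e(x)} ∈ ℤ[[t,q]]`
(`t = X 0`, `q = X 1`), defined coefficientwise: the coefficient of `t^n q^W` is the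
(finite) number of `x ∈ ℕ^e` with `size x = n` and `weight x = W`. -/
noncomputable def genSeries (e : ℕ) : MvPowerSeries (Fin 2) ℤ :=
  fun m => (Nat.card {x : Fin e → ℕ // size x = m 0 ∧ weight x = m 1} : ℤ)

/-- The substituted series `f_e(tq, q) = Σ_{x ∈ ℕ^e} t^{n_e(x)} q^{W_e(x)+n_e(x)}`,
defined coefficientwise. -/
noncomputable def genSeriesSubst (e : ℕ) : MvPowerSeries (Fin 2) ℤ :=
  fun m => (Nat.card {x : Fin e → ℕ // size x = m 0 ∧ weight x + size x = m 1} : ℤ)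

end Spiral

/-!
Split `x ∈ ℕ^(e+1)` according to its first coordinate. If `x₁ = 0`, dropping it leaves
`y ∈ ℕ^e` of the same size, and each pair `(1, j)` contributes `y_j` to the weight, so
`W(x) = W(y) + n(y)`. If `x₁ = c + 1`, moving `c` to the last position lowers the size by one
and keeps the weight, since `(y - (c+1)) + (c - y) = (c - y) + (y - c - 1)` for every other
coordinate `y`; this rotation is a bijection onto all of `ℕ^(e+1)`. Hence
`f_{e+1}(t,q) = t f_{e+1}(t,q) + f_e(tq,q)`.
-/

namespace Spiral

variable {e : ℕ}

lemma size_cons (a : ℕ) (y : Fin e → ℕ) :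
    size (Fin.cons a y : Fin (e + 1) → ℕ) = a + size y := by
  simp [size, Fin.sum_univ_succ]

lemma size_snoc (y : Fin e → ℕ) (c : ℕ) :
    size (Fin.snoc y c : Fin (e + 1) → ℕ) = size y + c := by
  simp [size, Fin.sum_univ_castSucc]

lemma weight_cons (a : ℕ) (y : Fin e → ℕ) :
    weight (Fin.cons a y : Fin (e + 1) → ℕ) = ∑ j, ((y j - a) + (a - y j - 1)) + weight y := by
  simp [weight, Fin.sum_univ_succ, Fin.succ_pos]

lemma weight_snoc (y : Fin e → ℕ) (c : ℕ) :
    weight (Fin.snoc y c : Fin (e + 1) → ℕ) = weight y + ∑ i, ((c - y i) + (y i - c - 1)) := by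
  simp [weight, Fin.sum_univ_castSucc, Fin.not_lt.mpr (Fin.le_last _), Finset.sum_add_distrib]

lemma size_cons_zero (y : Fin e → ℕ) : size (Fin.cons 0 y : Fin (e + 1) → ℕ) = size y := by
  rw [size_cons, zero_add]

lemma weight_cons_zero (y : Fin e → ℕ) :
    weight (Fin.cons 0 y : Fin (e + 1) → ℕ) = weight y + size y := by
  simp [weight_cons, size, add_comm]

lemma size_cons_succ (y : Fin e → ℕ) (c : ℕ) :
    size (Fin.cons (c + 1) y : Fin (e + 1) → ℕ) = size (Fin.snoc y c : Fin (e + 1) → ℕ) + 1 := by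
  rw [size_cons, size_snoc]; ring

lemma weight_cons_succ (y : Fin e → ℕ) (c : ℕ) :
    weight (Fin.cons (c + 1) y : Fin (e + 1) → ℕ) = weight (Fin.snoc y c : Fin (e + 1) → ℕ) := by
  rw [weight_cons, weight_snoc, add_comm]
  congr 1
  exact Finset.sum_congr rfl fun j _ => by omega

def rotate (z : Fin (e + 1) → ℕ) : Fin (e + 1) → ℕ := Fin.cons (z (Fin.last e) + 1) (Fin.init z)

lemma size_rotate (z : Fin (e + 1) → ℕ) : size (rotate z) = size z + 1 := by
  rw [rotate, size_cons_succ, Fin.snoc_init_self]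

lemma weight_rotate (z : Fin (e + 1) → ℕ) : weight (rotate z) = weight z := by
  rw [rotate, weight_cons_succ, Fin.snoc_init_self]

def splitHead : (Fin (e + 1) → ℕ) ⊕ (Fin e → ℕ) ≃ (Fin (e + 1) → ℕ) where
  toFun := Sum.elim rotate fun y => Fin.cons 0 y
  invFun x := if x 0 = 0 then .inr (Fin.tail x) else .inl (Fin.snoc (Fin.tail x) (x 0 - 1))
  left_inv s := by
    rcases s with z | y <;> simp [rotate]
  right_inv x := by
    by_cases hx : x 0 = 0
    · conv_rhs => rw [← Fin.cons_self_tail x, hx]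
      simp [hx]
    · simp only [hx, if_false, Sum.elim_inl, rotate, Fin.snoc_last, Fin.init_snoc,
        Nat.sub_add_cancel (Nat.pos_of_ne_zero hx), Fin.cons_self_tail]

lemma finite_of_size_le {k : ℕ} (n : ℕ) {p : (Fin k → ℕ) → Prop}
    (hp : ∀ x, p x → size x ≤ n) : Finite {x // p x} := by
  have hbox : {x | p x} ⊆ Set.Iic fun _ => n := fun x hx i =>
    (Finset.single_le_sum (fun j _ => Nat.zero_le (x j)) (Finset.mem_univ i)).trans (hp x hx)
  exact ((Set.finite_Iic _).subset hbox).to_subtype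

noncomputable def sizeWeightFiberEquiv (n W : ℕ) :
    {x : Fin (e + 1) → ℕ // size x = n ∧ weight x = W} ≃
      {z : Fin (e + 1) → ℕ // size z + 1 = n ∧ weight z = W} ⊕
        {y : Fin e → ℕ // size y = n ∧ weight y + size y = W} :=
  (splitHead.subtypeEquiv fun _ => Iff.rfl).symm.trans <| Equiv.subtypeSum.trans <|
    Equiv.sumCongr (Equiv.subtypeEquivRight fun z => by simp [splitHead, size_rotate, weight_rotate])
      (Equiv.subtypeEquivRight fun y => by simp [splitHead, size_cons_zero, weight_cons_zero])

lemma card_size_weight_fiber (n W : ℕ) :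
    Nat.card {x : Fin (e + 1) → ℕ // size x = n ∧ weight x = W} =
      Nat.card {z : Fin (e + 1) → ℕ // size z + 1 = n ∧ weight z = W} +
        Nat.card {y : Fin e → ℕ // size y = n ∧ weight y + size y = W} := by
  have := finite_of_size_le n fun (z : Fin (e + 1) → ℕ) (hz : size z + 1 = n ∧ weight z = W) =>
    by omega
  have := finite_of_size_le n fun (y : Fin e → ℕ) (hy : size y = n ∧ weight y + size y = W) =>
    hy.1.le
  rw [Nat.card_congr (sizeWeightFiberEquiv n W), Nat.card_sum]

section PowerSeries

open MvPowerSeries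

lemma coeff_genSeries (k : ℕ) (m : Fin 2 →₀ ℕ) :
    coeff m (genSeries k) = (Nat.card {x : Fin k → ℕ // size x = m 0 ∧ weight x = m 1} : ℤ) :=
  rfl

lemma coeff_genSeriesSubst (k : ℕ) (m : Fin 2 →₀ ℕ) :
    coeff m (genSeriesSubst k) =
      (Nat.card {x : Fin k → ℕ // size x = m 0 ∧ weight x + size x = m 1} : ℤ) :=
  rfl

lemma coeff_X_zero_mul_genSeries (k : ℕ) (m : Fin 2 →₀ ℕ) :
    coeff m (X 0 * genSeries k) =
      (Nat.card {z : Fin k → ℕ // size z + 1 = m 0 ∧ weight z = m 1} : ℤ) := by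
  rw [X_def, coeff_monomial_mul]
  split_ifs with h
  · have h0 : 1 ≤ m 0 := Finsupp.single_le_iff.mp h
    rw [one_mul, coeff_genSeries, Nat.cast_inj]
    refine Nat.card_congr (Equiv.subtypeEquivRight fun z => ?_)
    simp only [Finsupp.tsub_apply, Finsupp.single_eq_same, Finsupp.single_eq_of_ne one_ne_zero,
      tsub_zero]
    omega
  · have h0 : m 0 = 0 := by simpa [Finsupp.single_le_iff] using h
    simp [h0]

lemma one_sub_X_mul_genSeries_succ (e : ℕ) :
    (1 - X 0 : MvPowerSeries (Fin 2) ℤ) * genSeries (e + 1) = genSeriesSubst e := by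
  rw [sub_mul, one_mul, sub_eq_iff_eq_add']
  ext m
  rw [map_add, coeff_X_zero_mul_genSeries, coeff_genSeries, coeff_genSeriesSubst]
  exact_mod_cast card_size_weight_fiber (m 0) (m 1)

end PowerSeries

end Spiral

open Spiral in
/-- With `f_e(t,q) := Σ_{x ∈ ℕ^e} t^{n_e(x)} q^{W_e(x)} ∈ ℤ[[t,q]]`, for
every `d ≥ 2` the recurrence `f_d(t,q) = (1 − t)⁻¹ · f_{d−1}(tq, q)` holds in `ℤ[[t,q]]`.
It is stated multiplicatively (`1 − t` is a unit): `(1 − t) · f_d(t,q) = f_{d−1}(tq, q)`. -/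
theorem statement15 (d : ℕ) (hd : 2 ≤ d) :
    (1 - MvPowerSeries.X 0 : MvPowerSeries (Fin 2) ℤ) * genSeries d =
      genSeriesSubst (d - 1) := by
  obtain ⟨e, rfl⟩ : ∃ e, d = e + 1 := ⟨d - 1, by omega⟩
  exact one_sub_X_mul_genSeries_succ e
end

section
/- For every x = (n_1,…,n_d) ∈ ℕ^d, the set Hilb(x) of F_q[[T]]-submodules M of F = F_q[[T]]^d with dim_{F_q}(F/M) finite and LT(M) equal to the submodule generated by T^{n_1}u_1,…,T^{n_d}u_d is finite of cardinality q^{W(x)}, where W(x) = Σ_{i≠j∈[d]} max(0, ⌊n_j + j/d − n_i − i/d⌋) = Σ_{1≤i<j≤d} ( max(0, n_j − n_i) + max(0, n_i − n_j − 1) ). -/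
namespace Spiral

/-- Monomials `T^n u_i` of `F = F_q[[T]]^d` (seat `i` 0-indexed) are encoded by the
natural number `n*d + i`; the usual order on encodings is exactly the hlex order
`T^a u_i ≺ T^b u_j ↔ a < b ∨ (a = b ∧ i < j)`. `leadPos f` is the encoding of the
`≺`-least monomial appearing in `f` with nonzero coefficient (for `f ≠ 0`). -/
noncomputable def leadPos (d : ℕ) [NeZero d] {Fq : Type*} [Field Fq]
    (f : Fin d → PowerSeries Fq) : ℕ :=
  sInf {p : ℕ | PowerSeries.coeff (R := Fq) (p / d) (f ⟨p % d, Nat.mod_lt p (NeZero.pos d)⟩) ≠ 0}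

/-- The leading term `LT(f)` of `f ∈ F = F_q[[T]]^d`: the term of `f` supported on its
`≺`-least monomial `T^n u_i` with nonzero coefficient (where `≺` is the hlex order). -/
noncomputable def LTerm (d : ℕ) [NeZero d] {Fq : Type*} [Field Fq]
    (f : Fin d → PowerSeries Fq) : Fin d → PowerSeries Fq :=
  Pi.single ⟨leadPos d f % d, Nat.mod_lt _ (NeZero.pos d)⟩
    (PowerSeries.monomial (R := Fq) (leadPos d f / d)
      (PowerSeries.coeff (R := Fq) (leadPos d f / d)
        (f ⟨leadPos d f % d, Nat.mod_lt _ (NeZero.pos d)⟩)))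

/-- The leading submodule `LT(M)`: the `F_q[[T]]`-submodule of `F` generated by the
leading terms `LT(f)` of the nonzero elements `f ∈ M`. -/
noncomputable def LTsub (d : ℕ) [NeZero d] {Fq : Type*} [Field Fq]
    (M : Submodule (PowerSeries Fq) (Fin d → PowerSeries Fq)) :
    Submodule (PowerSeries Fq) (Fin d → PowerSeries Fq) :=
  Submodule.span (PowerSeries Fq) {g | ∃ f ∈ M, f ≠ 0 ∧ LTerm d f = g}

/-- The standard monomial `T^n u_i ∈ F = F_q[[T]]^d`. -/
noncomputable def stdMono (d : ℕ) {Fq : Type*} [Field Fq] (n : ℕ) (i : Fin d) :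
    Fin d → PowerSeries Fq :=
  Pi.single i ((PowerSeries.monomial (R := Fq) n) 1)

end Spiral

/-!
Encode the monomial `T^m u_j` by the position `d * m + j`, so that the hlex order becomes the
order of `ℕ`. The positions `p` with `p / d < x (p % d)` form the staircase: the monomials outside
`⟨T^(x i) u_i⟩`. Each `M ∈ Hilb(x)` has a unique reduced basis
`g_i = T^(x i) u_i + (a combination of staircase monomials after T^(x i) u_i)`. Indeed, division
by `M` (which terminates because `M ⊇ T^N F` by Nakayama's lemma) splits every `f ∈ F` into an
element of `M` plus a part supported on the staircase, and an element of `M` supported on the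
staircase is zero because its leading term would lie outside `LT(M)`. Conversely, for arbitrary
tails the leading terms of the `g_i` lie in distinct coordinates, so no combination of the `g_i`
cancels them: their span has leading submodule `⟨T^(x i) u_i⟩`, and finite codimension since
their determinant is a nonzero power series. Thus `Hilb(x)` is in bijection with the choices of
tails, and counting the staircase positions after each `T^(x i) u_i` gives `W(x)`.
-/

namespace Spiral

open PowerSeries Submodule

noncomputable section

section Coefficients

variable {R : Type*} [CommRing R] {d : ℕ} [NeZero d]

variable (d) in
def seat (p : ℕ) : Fin d := ⟨p % d, Nat.mod_lt p (NeZero.pos d)⟩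

def pos (m : ℕ) (j : Fin d) : ℕ := d * m + j

def coeffAt (p : ℕ) : (Fin d → R⟦X⟧) →ₗ[R] R :=
  coeff (p / d) ∘ₗ LinearMap.proj (seat d p)

omit [NeZero d] in
lemma pos_lt_pos_iff {m m' : ℕ} {j j' : Fin d} :
    pos m j < pos m' j' ↔ m < m' ∨ m = m' ∧ j < j' := by
  have hj := j.isLt
  have hj' := j'.isLt
  rcases lt_trichotomy m m' with h | rfl | h
  · have : d * (m + 1) ≤ d * m' := Nat.mul_le_mul_left d h
    simp only [pos, Nat.mul_succ] at *; omega
  · simp only [pos, Fin.lt_def, lt_irrefl, true_and, false_or, add_lt_add_iff_left]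
  · have : d * (m' + 1) ≤ d * m := Nat.mul_le_mul_left d h
    simp only [pos, Nat.mul_succ] at *; omega

lemma pos_div (m : ℕ) (j : Fin d) : pos m j / d = m := by
  rw [pos, Nat.mul_add_div (NeZero.pos d), Nat.div_eq_of_lt j.isLt, add_zero]

lemma seat_pos (m : ℕ) (j : Fin d) : seat d (pos m j) = j :=
  Fin.ext <| by simp [seat, pos, Nat.mod_eq_of_lt j.isLt]

lemma pos_seat (p : ℕ) : pos (p / d) (seat d p) = p := Nat.div_add_mod p d

omit [NeZero d] in
lemma pos_add_mul (m s : ℕ) (j : Fin d) : pos m j + d * s = pos (m + s) j := by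
  simp only [pos]; ring

lemma eq_of_seat_eq_of_div_eq {p q : ℕ} (hs : seat d p = seat d q) (hd : p / d = q / d) :
    p = q := by
  rw [← pos_seat (d := d) p, ← pos_seat (d := d) q, hs, hd]

lemma coeffAt_pos (m : ℕ) (j : Fin d) (f : Fin d → R⟦X⟧) :
    coeffAt (pos m j) f = coeff m (f j) := by
  simp [coeffAt, pos_div, seat_pos]

lemma coeffAt_ext {f g : Fin d → R⟦X⟧} (h : ∀ p, coeffAt p f = coeffAt p g) : f = g :=
  funext fun j => PowerSeries.ext fun m => by simpa [coeffAt_pos] using h (pos m j)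

lemma exists_coeffAt_ne_zero {f : Fin d → R⟦X⟧} (hf : f ≠ 0) : ∃ p, coeffAt p f ≠ 0 := by
  by_contra! h
  exact hf (coeffAt_ext fun p => by simp [h])

lemma coeffAt_single (j : Fin d) (g : R⟦X⟧) (p : ℕ) :
    coeffAt p (Pi.single j g) = if seat d p = j then coeff (p / d) g else 0 := by
  simp only [coeffAt, LinearMap.comp_apply, LinearMap.proj_apply, Pi.single_apply]
  split_ifs <;> simp

variable (d) in
def basisVec (p : ℕ) : Fin d → R⟦X⟧ := Pi.single (seat d p) (monomial (p / d) 1)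

lemma coeffAt_basisVec (p q : ℕ) :
    coeffAt q (basisVec d p : Fin d → R⟦X⟧) = if q = p then 1 else 0 := by
  rw [basisVec, coeffAt_single, coeff_monomial]
  by_cases h : q = p
  · simp [h]
  · simp only [h, if_false, ite_eq_right_iff]
    exact fun hs hd => absurd (eq_of_seat_eq_of_div_eq hs hd) h


lemma coeffAt_smul (a : R⟦X⟧) (f : Fin d → R⟦X⟧) (p : ℕ) :
    coeffAt p (a • f) = ∑ s ∈ Finset.range (p / d + 1), coeff s a * coeffAt (p - d * s) f := by
  change coeff (p / d) (a * f (seat d p)) = _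
  rw [coeff_mul, Finset.Nat.sum_antidiagonal_eq_sum_range_succ_mk]
  refine Finset.sum_congr rfl fun s hs => ?_
  have hs : s ≤ p / d := Nat.lt_succ_iff.mp (Finset.mem_range.mp hs)
  have hp : p - d * s = pos (p / d - s) (seat d p) := by
    conv_lhs => rw [← pos_seat (d := d) p]
    simp only [pos, Nat.mul_sub]
    have := Nat.mul_le_mul_left d hs
    omega
  rw [hp, coeffAt_pos]

end Coefficients

section Lead

variable {R : Type*} [CommRing R] {d : ℕ} [NeZero d]

def HasLeadAt (f : Fin d → R⟦X⟧) (n : ℕ) : Prop :=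
  (∀ p < n, coeffAt p f = 0) ∧ coeffAt n f ≠ 0

lemma HasLeadAt.ne_zero {f : Fin d → R⟦X⟧} {n : ℕ} (h : HasLeadAt f n) : f ≠ 0 := by
  rintro rfl
  exact h.2 (map_zero _)

lemma HasLeadAt.unique {f : Fin d → R⟦X⟧} {n n' : ℕ} (h : HasLeadAt f n) (h' : HasLeadAt f n') :
    n = n' := by
  by_contra hne
  rcases Nat.lt_or_gt_of_ne hne with hlt | hlt
  · exact h.2 (h'.1 n hlt)
  · exact h'.2 (h.1 n' hlt)

section Smul

variable {f : Fin d → R⟦X⟧} {a : R⟦X⟧} {n s : ℕ}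

lemma coeffAt_smul_of_lt (hf : ∀ p < n, coeffAt p f = 0) (ha : ∀ t < s, coeff t a = 0)
    {p : ℕ} (hp : p < n + d * s) : coeffAt p (a • f) = 0 := by
  rw [coeffAt_smul]
  refine Finset.sum_eq_zero fun t ht => ?_
  rcases lt_or_ge t s with hts | hts
  · rw [ha t hts, zero_mul]
  · have h1 := Nat.mul_le_mul_left d hts
    have h2 := Nat.mul_le_mul_left d (Nat.lt_succ_iff.mp (Finset.mem_range.mp ht))
    have h3 := Nat.mul_div_le p d
    rw [hf _ (by omega), mul_zero]

lemma coeffAt_smul_add_mul (hf : ∀ p < n, coeffAt p f = 0) (ha : ∀ t < s, coeff t a = 0) :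
    coeffAt (n + d * s) (a • f) = coeff s a * coeffAt n f := by
  have hdiv : (n + d * s) / d = n / d + s := by
    rw [add_comm, Nat.mul_add_div (NeZero.pos d), add_comm]
  rw [coeffAt_smul, Finset.sum_eq_single_of_mem s (by simp [hdiv]), Nat.add_sub_cancel]
  intro t ht hts
  rcases lt_or_gt_of_ne hts with hts | hts
  · rw [ha t hts, zero_mul]
  · have h1 : t ≤ n / d + s := by simpa [hdiv, Nat.lt_succ_iff] using ht
    have h2 := Nat.mul_le_mul_left d (Nat.sub_le_of_le_add (by omega) : t - s ≤ n / d)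
    have h3 := Nat.mul_div_le n d
    have h4 : d * (t - s) + d * s = d * t := by rw [← Nat.mul_add, Nat.sub_add_cancel hts.le]
    have h5 : 0 < d * (t - s) := Nat.mul_pos (NeZero.pos d) (by omega)
    rw [hf _ (by omega), mul_zero]

lemma HasLeadAt.smul [IsDomain R] (hf : HasLeadAt f n) (ha : a ≠ 0) :
    HasLeadAt (a • f) (n + d * a.order.toNat) := by
  have ha' : ∀ t < a.order.toNat, coeff t a = 0 := fun t ht => coeff_of_lt_order_toNat t ht
  refine ⟨fun p hp => coeffAt_smul_of_lt hf.1 ha' hp, ?_⟩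
  rw [coeffAt_smul_add_mul hf.1 ha']
  exact mul_ne_zero (coeff_order ha) hf.2

end Smul

lemma HasLeadAt.sum {ι : Type*} {s : Finset ι} {g : ι → Fin d → R⟦X⟧} {v : ι → ℕ}
    (hg : ∀ i ∈ s, HasLeadAt (g i) (v i)) (hv : Set.InjOn v s) {i₀ : ι} (hi₀ : i₀ ∈ s)
    (hmin : ∀ i ∈ s, v i₀ ≤ v i) : HasLeadAt (∑ i ∈ s, g i) (v i₀) := by
  refine ⟨fun p hp => ?_, ?_⟩
  · rw [map_sum]
    exact Finset.sum_eq_zero fun i hi => (hg i hi).1 p (hp.trans_le (hmin i hi))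
  · rw [map_sum, Finset.sum_eq_single_of_mem i₀ hi₀ fun i hi hne => (hg i hi).1 _ ?_]
    · exact (hg i₀ hi₀).2
    · exact lt_of_le_of_ne (hmin i hi) fun h => hne (hv hi hi₀ h.symm)

/-- Leading positions in distinct seats cannot cancel. -/
lemma exists_hasLeadAt_sum_smul [IsDomain R] {g : Fin d → Fin d → R⟦X⟧} {m : Fin d → ℕ}
    (hg : ∀ i, HasLeadAt (g i) (pos (m i) i)) {a : Fin d → R⟦X⟧} (ha : a ≠ 0) :
    ∃ j s, HasLeadAt (∑ i, a i • g i) (pos (m j + s) j) := by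
  classical
  let S := Finset.univ.filter fun i => a i ≠ 0
  let v i := pos (m i + (a i).order.toNat) i
  have hS : S.Nonempty := by
    obtain ⟨i, hi⟩ := Function.ne_iff.mp ha
    exact ⟨i, by simpa [S] using hi⟩
  obtain ⟨j, hj, hmin⟩ := S.exists_min_image v hS
  have hv : Set.InjOn v S := fun i _ i' _ h => by
    simpa only [v, seat_pos] using congrArg (seat d) h
  have hsum : ∑ i ∈ S, a i • g i = ∑ i, a i • g i :=
    Finset.sum_filter_of_ne fun i _ h hai => h (by rw [hai, zero_smul])
  refine ⟨j, _, hsum ▸ HasLeadAt.sum (fun i hi => ?_) hv hj hmin⟩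
  rw [show v i = _ from (pos_add_mul _ _ i).symm]
  exact (hg i).smul (Finset.mem_filter.mp hi).2

end Lead

section LeadPos

variable {K : Type*} [Field K] {d : ℕ} [NeZero d] {f : Fin d → K⟦X⟧}

lemma hasLeadAt_leadPos (hf : f ≠ 0) : HasLeadAt f (leadPos d f) := by
  obtain ⟨p, hp⟩ := exists_coeffAt_ne_zero hf
  have hne : {p | coeffAt p f ≠ 0}.Nonempty := ⟨p, hp⟩
  exact ⟨fun q hq => by_contra fun h => (Nat.sInf_le h).not_gt hq, Nat.sInf_mem hne⟩

lemma leadPos_eq {n : ℕ} (h : HasLeadAt f n) : leadPos d f = n :=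
  (hasLeadAt_leadPos h.ne_zero).unique h

lemma coeffAt_LTerm (p : ℕ) :
    coeffAt p (LTerm d f) = if p = leadPos d f then coeffAt (leadPos d f) f else 0 := by
  change coeffAt p (Pi.single (seat d (leadPos d f)) (monomial (leadPos d f / d) _)) = _
  rw [coeffAt_single, coeff_monomial]
  by_cases hp : p = leadPos d f
  · simp only [hp, if_true]
    rfl
  · simp only [hp, if_false, ite_eq_right_iff]
    exact fun hs hd => absurd (eq_of_seat_eq_of_div_eq hs hd) hp

lemma LTerm_eq {m : ℕ} {j : Fin d} (h : HasLeadAt f (pos m j)) :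
    LTerm d f = Pi.single j (monomial m (coeffAt (pos m j) f)) := by
  change (Pi.single (seat d (leadPos d f)) (monomial (leadPos d f / d) (coeffAt (leadPos d f) f)) :
    Fin d → K⟦X⟧) = _
  rw [leadPos_eq h, seat_pos, pos_div]

end LeadPos

section Staircase

variable {K : Type*} [Field K] {d : ℕ} [NeZero d] {x : Fin d → ℕ}

def staircase (x : Fin d → ℕ) : Set ℕ := {p | p / d < x (seat d p)}

lemma pos_mem_staircase_iff {m : ℕ} {j : Fin d} : pos m j ∈ staircase x ↔ m < x j := by
  simp [staircase, pos_div, seat_pos]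

lemma stdMono_eq_basisVec (m : ℕ) (j : Fin d) :
    stdMono d m j = (basisVec d (pos m j) : Fin d → K⟦X⟧) := by
  rw [stdMono, basisVec, seat_pos, pos_div]

variable (K) in
def monomialSpan (x : Fin d → ℕ) : Submodule K⟦X⟧ (Fin d → K⟦X⟧) :=
  span K⟦X⟧ (Set.range fun i => stdMono d (x i) i)

omit [NeZero d] in
lemma mem_monomialSpan_iff_dvd {f : Fin d → K⟦X⟧} :
    f ∈ monomialSpan K x ↔ ∀ i, X ^ x i ∣ f i := by
  simp only [monomialSpan, mem_span_range_iff_exists_fun, stdMono, ← X_pow_eq]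
  constructor
  · rintro ⟨c, rfl⟩ i
    simp [Finset.sum_apply, Pi.single_apply]
  · intro h
    choose c hc using h
    exact ⟨c, funext fun i => by simp [Finset.sum_apply, Pi.single_apply, hc, mul_comm]⟩

lemma mem_monomialSpan_iff {f : Fin d → K⟦X⟧} :
    f ∈ monomialSpan K x ↔ ∀ p ∈ staircase x, coeffAt p f = 0 := by
  simp only [mem_monomialSpan_iff_dvd, X_pow_dvd_iff]
  constructor
  · intro h p hp
    rw [← pos_seat (d := d) p, coeffAt_pos]
    exact h _ _ hp
  · intro h i m hm
    rw [← coeffAt_pos]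
    exact h _ (pos_mem_staircase_iff.mpr hm)

lemma basisVec_mem_monomialSpan {p : ℕ} (hp : p ∉ staircase x) :
    (basisVec d p : Fin d → K⟦X⟧) ∈ monomialSpan K x :=
  mem_monomialSpan_iff.mpr fun q hq => by
    rw [coeffAt_basisVec, if_neg (ne_of_mem_of_not_mem hq hp)]

variable (K) in
def staircaseSupported (x : Fin d → ℕ) : Submodule K (Fin d → K⟦X⟧) :=
  ⨅ p ∈ (staircase x)ᶜ, LinearMap.ker (coeffAt p)

lemma mem_staircaseSupported {f : Fin d → K⟦X⟧} :
    f ∈ staircaseSupported K x ↔ ∀ p ∉ staircase x, coeffAt p f = 0 := by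
  simp [staircaseSupported, Submodule.mem_iInf]

end Staircase

section LeadingSubmodule

variable {K : Type*} [Field K] {d : ℕ} [NeZero d] {M : Submodule K⟦X⟧ (Fin d → K⟦X⟧)}

lemma exists_hasLeadAt_of_mem_LTsub {g : Fin d → K⟦X⟧} (hg : g ∈ LTsub d M) {p : ℕ}
    (hp : coeffAt p g ≠ 0) : ∃ f ∈ M, HasLeadAt f p := by
  induction hg using Submodule.span_induction generalizing p with
  | mem g hg =>
    obtain ⟨f, hfM, hf0, rfl⟩ := hg
    rw [coeffAt_LTerm] at hp
    split_ifs at hp with h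
    · exact ⟨f, hfM, h ▸ hasLeadAt_leadPos hf0⟩
    · exact absurd rfl hp
  | zero => simp at hp
  | add g h _ _ ihg ihh =>
    by_cases hg : coeffAt p g = 0
    · exact ihh (by simpa [hg] using hp)
    · exact ihg hg
  | smul a g _ ih =>
    rw [coeffAt_smul] at hp
    obtain ⟨s, hs, hne⟩ := Finset.exists_ne_zero_of_sum_ne_zero hp
    obtain ⟨f, hfM, hf⟩ := ih (right_ne_zero_of_mul hne)
    refine ⟨X ^ s • f, M.smul_mem _ hfM, ?_⟩
    have hlead := hf.smul (pow_ne_zero s (X_ne_zero (R := K)))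
    have h1 := Nat.mul_le_mul_left d (Nat.lt_succ_iff.mp (Finset.mem_range.mp hs))
    have h2 := Nat.mul_div_le p d
    rwa [order_X_pow, ENat.toNat_natCast, Nat.sub_add_cancel (by omega)] at hlead

variable {x : Fin d → ℕ}

lemma exists_hasLeadAt_of_notMem_staircase (hLT : LTsub d M = monomialSpan K x) {p : ℕ}
    (hp : p ∉ staircase x) : ∃ f ∈ M, HasLeadAt f p :=
  exists_hasLeadAt_of_mem_LTsub (hLT ▸ basisVec_mem_monomialSpan hp)
    (by rw [coeffAt_basisVec, if_pos rfl]; exact one_ne_zero)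

lemma LTerm_mem_monomialSpan_iff {f : Fin d → K⟦X⟧} (hf0 : f ≠ 0) :
    LTerm d f ∈ monomialSpan K x ↔ leadPos d f ∉ staircase x := by
  simp only [mem_monomialSpan_iff, coeffAt_LTerm, ite_eq_right_iff]
  exact ⟨fun h hs => (hasLeadAt_leadPos hf0).2 (h _ hs rfl), fun h p hp hpf => absurd (hpf ▸ hp) h⟩

lemma leadPos_notMem_staircase (hLT : LTsub d M = monomialSpan K x) {f : Fin d → K⟦X⟧}
    (hfM : f ∈ M) (hf0 : f ≠ 0) : leadPos d f ∉ staircase x :=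
  (LTerm_mem_monomialSpan_iff hf0).mp (hLT ▸ subset_span ⟨f, hfM, hf0, rfl⟩)

lemma eq_zero_of_mem_staircaseSupported (hLT : LTsub d M = monomialSpan K x)
    {f : Fin d → K⟦X⟧} (hfM : f ∈ M) (hf : f ∈ staircaseSupported K x) : f = 0 := by
  by_contra hf0
  exact (hasLeadAt_leadPos hf0).2
    (mem_staircaseSupported.mp hf _ (leadPos_notMem_staircase hLT hfM hf0))

end LeadingSubmodule

section Nakayama

variable {K : Type*} [Field K] {N : Type*} [AddCommGroup N] [Module K⟦X⟧ N] [Module K N]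
  [IsScalarTower K K⟦X⟧ N]

/-- The submodules `X ^ n • (N ⧸ M)` form a decreasing chain of finite-dimensional subspaces,
so they stabilise, and Nakayama's lemma kills the stable term. -/
lemma exists_X_pow_smul_mem (M : Submodule K⟦X⟧ N) [Module.Finite K (N ⧸ M)] :
    ∃ n : ℕ, ∀ f : N, (X : K⟦X⟧) ^ n • f ∈ M := by
  let I : Ideal K⟦X⟧ := Ideal.span {X}
  have : IsArtinian K⟦X⟧ (N ⧸ M) := isArtinian_of_tower K inferInstance
  have : IsNoetherian K⟦X⟧ (N ⧸ M) := isNoetherian_of_tower K inferInstance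
  let W : ℕ →o (Submodule K⟦X⟧ (N ⧸ M))ᵒᵈ :=
    ⟨fun n => OrderDual.toDual (I ^ n • ⊤), fun _ _ hmn =>
      smul_mono_left (Ideal.pow_le_pow_right hmn)⟩
  obtain ⟨n, hn⟩ := IsArtinian.monotone_stabilizes W
  have hstable : I ^ n • (⊤ : Submodule K⟦X⟧ (N ⧸ M)) ≤ I • I ^ n • ⊤ := by
    rw [← Submodule.smul_assoc, smul_eq_mul, ← pow_succ']
    exact (congrArg OrderDual.ofDual (hn (n + 1) n.le_succ)).le
  have hjac : I ≤ Ideal.jacobson ⊥ := by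
    rw [IsLocalRing.jacobson_eq_maximalIdeal ⊥ bot_ne_top, maximalIdeal_eq_span_X]
  have hbot := eq_bot_of_le_smul_of_le_jacobson_bot I _ (IsNoetherian.noetherian _) hstable hjac
  refine ⟨n, fun f => ?_⟩
  rw [← Submodule.Quotient.mk_eq_zero, ← Submodule.mem_bot K⟦X⟧, ← hbot, Submodule.Quotient.mk_smul]
  exact smul_mem_smul
    (Ideal.span_singleton_pow (X : K⟦X⟧) n ▸ Ideal.mem_span_singleton_self _) mem_top

end Nakayama

section Division

variable {K : Type*} [Field K] {d : ℕ} [NeZero d] {M : Submodule K⟦X⟧ (Fin d → K⟦X⟧)}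
  {x : Fin d → ℕ}

lemma exists_eq_X_pow_smul {f : Fin d → K⟦X⟧} {n : ℕ} (hf : ∀ p < d * n, coeffAt p f = 0) :
    ∃ g, f = (X : K⟦X⟧) ^ n • g := by
  have hdvd : ∀ i, (X : K⟦X⟧) ^ n ∣ f i := fun i => X_pow_dvd_iff.mpr fun m hm => by
    have := Nat.mul_le_mul_left d (Nat.succ_le_of_lt hm)
    rw [← coeffAt_pos]
    exact hf _ (by simp only [pos, Nat.mul_succ] at *; omega)
  choose g hg using hdvd
  exact ⟨g, funext hg⟩

lemma exists_mem_sup_sub_coeffAt_eq_zero (hLT : LTsub d M = monomialSpan K x)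
    {f : Fin d → K⟦X⟧} {k : ℕ} (hf : ∀ p < k, coeffAt p f = 0) :
    ∃ r ∈ staircaseSupported K x ⊔ M.restrictScalars K, ∀ p < k + 1, coeffAt p (f - r) = 0 := by
  suffices ∃ r ∈ staircaseSupported K x ⊔ M.restrictScalars K,
      (∀ p < k, coeffAt p r = 0) ∧ coeffAt k r = coeffAt k f by
    obtain ⟨r, hr, hbelow, hk⟩ := this
    refine ⟨r, hr, fun p hp => ?_⟩
    rcases Nat.lt_succ_iff_lt_or_eq.mp hp with hp | rfl
    · rw [map_sub, hf p hp, hbelow p hp, sub_zero]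
    · rw [map_sub, hk, sub_self]
  by_cases hk : k ∈ staircase x
  · refine ⟨coeffAt k f • basisVec d k, mem_sup_left ?_, fun p hp => ?_, ?_⟩
    · refine Submodule.smul_mem _ _ (mem_staircaseSupported.mpr fun q hq => ?_)
      rw [coeffAt_basisVec, if_neg (ne_of_mem_of_not_mem hk hq).symm]
    · rw [map_smul, coeffAt_basisVec, if_neg hp.ne, smul_zero]
    · rw [map_smul, coeffAt_basisVec, if_pos rfl, smul_eq_mul, mul_one]
  · obtain ⟨h, hhM, hh⟩ := exists_hasLeadAt_of_notMem_staircase hLT hk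
    refine ⟨(coeffAt k f / coeffAt k h) • h, mem_sup_right (M.smul_of_tower_mem _ hhM),
      fun p hp => ?_, ?_⟩
    · rw [map_smul, hh.1 p hp, smul_zero]
    · rw [map_smul, smul_eq_mul, div_mul_cancel₀ _ hh.2]

/-- Division by `M`: clear the coefficients of `f` one position at a time, by a monomial on the
staircase or by an element of `M` leading off it, until `f` becomes divisible by the power of
`X` that `M` absorbs. -/
lemma mem_staircaseSupported_sup (hLT : LTsub d M = monomialSpan K x)
    [Module.Finite K ((Fin d → K⟦X⟧) ⧸ M)] (f : Fin d → K⟦X⟧) :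
    f ∈ staircaseSupported K x ⊔ M.restrictScalars K := by
  obtain ⟨n, hn⟩ := exists_X_pow_smul_mem M
  suffices h : ∀ t k, d * n ≤ k + t → ∀ f : Fin d → K⟦X⟧, (∀ p < k, coeffAt p f = 0) →
      f ∈ staircaseSupported K x ⊔ M.restrictScalars K from
    h (d * n) 0 (by omega) f (by simp)
  intro t
  induction t with
  | zero =>
    intro k hk f hf
    obtain ⟨g, rfl⟩ := exists_eq_X_pow_smul (n := n) fun p hp => hf p (by omega)
    exact mem_sup_right (hn g)
  | succ t ih =>
    intro k hk f hf
    obtain ⟨r, hr, hfr⟩ := exists_mem_sup_sub_coeffAt_eq_zero hLT hf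
    simpa using add_mem (ih (k + 1) (by omega) _ hfr) hr

end Division

section Generators

variable {K : Type*} [Field K] {d : ℕ} [NeZero d] (x : Fin d → ℕ)

def staircaseAfter (i : Fin d) : Finset ℕ :=
  (Finset.range (d * Finset.univ.sup x)).filter fun p => p / d < x (seat d p) ∧ pos (x i) i < p

variable {x}

lemma mem_staircaseAfter {i : Fin d} {p : ℕ} :
    p ∈ staircaseAfter x i ↔ p ∈ staircase x ∧ pos (x i) i < p := by
  simp only [staircaseAfter, Finset.mem_filter, Finset.mem_range, staircase, Set.mem_ofPred_eq,
    and_iff_right_iff_imp]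
  rintro ⟨hp, -⟩
  have h1 : x (seat d p) ≤ Finset.univ.sup x := Finset.le_sup (Finset.mem_univ _)
  have h2 : d * (p / d + 1) ≤ d * Finset.univ.sup x := Nat.mul_le_mul_left d (hp.trans_le h1)
  have h3 := Nat.lt_mul_div_succ p (NeZero.pos d)
  omega

lemma coeffAt_sum_smul_basisVec (s : Finset ℕ) (c : s → K) (q : ℕ) :
    coeffAt q (∑ p : s, c p • (basisVec d p : Fin d → K⟦X⟧)) =
      if h : q ∈ s then c ⟨q, h⟩ else 0 := by
  simp only [map_sum, map_smul, coeffAt_basisVec, smul_eq_mul, mul_ite, mul_one, mul_zero]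
  split_ifs with h
  · rw [Fintype.sum_eq_single ⟨q, h⟩ fun p hp => if_neg fun hq => hp (Subtype.ext hq.symm)]
    simp
  · exact Finset.sum_eq_zero fun p _ => if_neg fun (hq : q = p) => h (hq ▸ p.2)

variable (x) in
def reducedGen (c : ∀ i, staircaseAfter x i → K) (i : Fin d) : Fin d → K⟦X⟧ :=
  stdMono d (x i) i + ∑ p : staircaseAfter x i, c i p • basisVec d p

variable (c : ∀ i, staircaseAfter x i → K)

lemma coeffAt_reducedGen (i : Fin d) (q : ℕ) :
    coeffAt q (reducedGen x c i) =
      (if q = pos (x i) i then 1 else 0) +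
        if h : q ∈ staircaseAfter x i then c i ⟨q, h⟩ else 0 := by
  rw [reducedGen, map_add, stdMono_eq_basisVec, coeffAt_basisVec, coeffAt_sum_smul_basisVec]

lemma coeffAt_reducedGen_pos (i : Fin d) : coeffAt (pos (x i) i) (reducedGen x c i) = 1 := by
  rw [coeffAt_reducedGen, if_pos rfl, dif_neg fun h => (mem_staircaseAfter.mp h).2.false, add_zero]

lemma hasLeadAt_reducedGen (i : Fin d) : HasLeadAt (reducedGen x c i) (pos (x i) i) := by
  refine ⟨fun p hp => ?_, by rw [coeffAt_reducedGen_pos]; exact one_ne_zero⟩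
  rw [coeffAt_reducedGen, if_neg hp.ne, dif_neg fun h => (mem_staircaseAfter.mp h).2.not_gt hp,
    add_zero]

end Generators

section Counting

variable {d : ℕ} [NeZero d]

lemma pos_mem_staircaseAfter_iff {x : Fin d → ℕ} {i j : Fin d} {m : ℕ} :
    pos m j ∈ staircaseAfter x i ↔ x i + (if i < j then 0 else 1) ≤ m ∧ m < x j := by
  rw [mem_staircaseAfter, pos_mem_staircase_iff, pos_lt_pos_iff, and_comm]
  split_ifs with h <;> simp only [h, and_true, and_false, or_false] <;> omega

lemma card_staircaseAfter (x : Fin d → ℕ) (i : Fin d) :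
    (staircaseAfter x i).card = ∑ j, (x j - (x i + if i < j then 0 else 1)) := by
  simp only [← Nat.card_Ico]
  rw [← Finset.card_sigma]
  refine Finset.card_nbij' (fun p => ⟨seat d p, p / d⟩) (fun jm => pos jm.2 jm.1) ?_ ?_ ?_ ?_
  · intro p hp
    rw [Finset.mem_coe, ← pos_seat (d := d) p, pos_mem_staircaseAfter_iff] at hp
    simpa using hp
  · rintro ⟨j, m⟩ h
    simpa [pos_mem_staircaseAfter_iff] using h
  · intro p _
    exact pos_seat p
  · rintro ⟨j, m⟩ _
    simp [seat_pos, pos_div]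

lemma sum_card_staircaseAfter (x : Fin d → ℕ) :
    ∑ i, (staircaseAfter x i).card = weight x := by
  have hterm (i j : Fin d) : x j - (x i + if i < j then 0 else 1) =
      (if i < j then x j - x i else 0) + if j < i then x j - x i - 1 else 0 := by
    rcases lt_trichotomy i j with h | rfl | h
    · simp [h, h.not_gt]
    · simp
    · simp [h, h.not_gt]
      omega
  simp only [card_staircaseAfter, hterm, Finset.sum_add_distrib]
  rw [Finset.sum_comm (f := fun i j => if j < i then x j - x i - 1 else 0), weight,
    ← Finset.sum_add_distrib]
  refine Finset.sum_congr rfl fun i _ => ?_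
  rw [← Finset.sum_add_distrib]
  refine Finset.sum_congr rfl fun j _ => ?_
  split_ifs <;> omega

end Counting

section FiniteQuotient

open scoped Matrix

lemma det_smul_mem_span_range {R ι : Type*} [CommRing R] [Fintype ι] [DecidableEq ι]
    (g : ι → ι → R) (f : ι → R) : (Matrix.of fun j i => g i j).det • f ∈ span R (Set.range g) := by
  set A := Matrix.of fun j i => g i j
  have hmulVec : ∀ w, A *ᵥ w = ∑ i, w i • g i := fun w => by
    ext j
    simp [A, Matrix.mulVec, dotProduct, Finset.sum_apply, mul_comm]
  have hf : A.det • f = A *ᵥ (A.adjugate *ᵥ f) := by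
    rw [Matrix.mulVec_mulVec, Matrix.mul_adjugate, Matrix.smul_mulVec, Matrix.one_mulVec]
  rw [hf, hmulVec]
  exact sum_mem fun i _ => smul_mem _ _ (subset_span ⟨i, rfl⟩)

variable {K : Type*} [Field K]

lemma exists_X_pow_smul_mem_span {d : ℕ} [NeZero d] {g : Fin d → Fin d → K⟦X⟧} {m : Fin d → ℕ}
    (hg : ∀ i, HasLeadAt (g i) (pos (m i) i)) :
    ∃ k : ℕ, ∀ f, (X : K⟦X⟧) ^ k • f ∈ span K⟦X⟧ (Set.range g) := by
  set r := (Matrix.of fun j i => g i j).det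
  have hr : r ≠ 0 := fun h => by
    obtain ⟨a, ha, hga⟩ := Matrix.exists_mulVec_eq_zero_iff.mpr h
    obtain ⟨j, s, hlead⟩ := exists_hasLeadAt_sum_smul hg ha
    refine hlead.ne_zero (Eq.trans ?_ hga)
    ext i
    simp [Matrix.mulVec, dotProduct, Finset.sum_apply, mul_comm]
  obtain ⟨u, hu⟩ := isUnit_divided_by_X_pow_order hr
  refine ⟨r.order.toNat, fun f => ?_⟩
  have hX : (X : K⟦X⟧) ^ r.order.toNat = (↑u⁻¹ * r : K⟦X⟧) := by
    conv_rhs => rw [← X_pow_order_mul_divXPowOrder (f := r), ← hu]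
    rw [mul_left_comm, Units.inv_mul, mul_one]
  rw [hX, mul_smul]
  exact smul_mem _ _ (det_smul_mem_span_range g f)

/-- Every class modulo `M` is represented by a vector of polynomials of degree `< k`. -/
lemma finite_quotient_of_X_pow_smul_mem {ι : Type*} [Finite ι]
    (M : Submodule K⟦X⟧ (ι → K⟦X⟧)) {k : ℕ} (hM : ∀ f, (X : K⟦X⟧) ^ k • f ∈ M) :
    Module.Finite K ((ι → K⟦X⟧) ⧸ M) := by
  have : Module.Finite K (Polynomial.degreeLT K k) :=
    Module.Finite.equiv (Polynomial.degreeLTEquiv K k).symm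
  let φ : (ι → Polynomial.degreeLT K k) →ₗ[K] (ι → K⟦X⟧) ⧸ M :=
    (M.mkQ.restrictScalars K) ∘ₗ LinearMap.pi fun i =>
      (Polynomial.coeToPowerSeries.algHom K).toLinearMap ∘ₗ (Polynomial.degreeLT K k).subtype ∘ₗ
        LinearMap.proj i
  refine Module.Finite.of_surjective φ fun q => ?_
  obtain ⟨f, rfl⟩ := M.mkQ_surjective q
  refine ⟨fun i => ⟨trunc k (f i), Polynomial.mem_degreeLT.mpr (degree_trunc_lt _ _)⟩, ?_⟩
  change M.mkQ (fun i => (trunc k (f i) : K⟦X⟧)) = M.mkQ f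
  rw [mkQ_apply, mkQ_apply, Submodule.Quotient.eq, ← neg_mem_iff, neg_sub]
  convert hM fun i => mk fun j => coeff (j + k) (f i) using 1
  ext1 i
  simp only [Pi.sub_apply, Pi.smul_apply, smul_eq_mul]
  rw [sub_eq_iff_eq_add', add_comm]
  exact eq_X_pow_mul_shift_add_trunc k (f i)

end FiniteQuotient

section Parametrisation

variable {K : Type*} [Field K] {d : ℕ} [NeZero d] {x : Fin d → ℕ}

variable (x) in
def hilbOf (c : ∀ i, staircaseAfter x i → K) : Submodule K⟦X⟧ (Fin d → K⟦X⟧) :=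
  span K⟦X⟧ (Set.range (reducedGen x c))

variable (c : ∀ i, staircaseAfter x i → K)

lemma LTerm_reducedGen (i : Fin d) : LTerm d (reducedGen x c i) = stdMono d (x i) i := by
  rw [LTerm_eq (hasLeadAt_reducedGen c i), coeffAt_reducedGen_pos, stdMono]

lemma leadPos_notMem_staircase_of_mem_hilbOf {f : Fin d → K⟦X⟧} (hf : f ∈ hilbOf x c)
    (hf0 : f ≠ 0) : leadPos d f ∉ staircase x := by
  obtain ⟨a, rfl⟩ := (mem_span_range_iff_exists_fun _).mp hf
  have ha : a ≠ 0 := by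
    rintro rfl
    simp at hf0
  obtain ⟨j, s, hlead⟩ := exists_hasLeadAt_sum_smul (hasLeadAt_reducedGen c) ha
  rw [leadPos_eq hlead, pos_mem_staircase_iff]
  omega

lemma LTsub_hilbOf : LTsub d (hilbOf x c) = monomialSpan K x := by
  refine le_antisymm (span_le.mpr ?_) (span_le.mpr ?_)
  · rintro _ ⟨f, hf, hf0, rfl⟩
    exact (LTerm_mem_monomialSpan_iff hf0).mpr (leadPos_notMem_staircase_of_mem_hilbOf c hf hf0)
  · rintro _ ⟨i, rfl⟩
    exact subset_span ⟨reducedGen x c i, subset_span ⟨i, rfl⟩, (hasLeadAt_reducedGen c i).ne_zero,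
      LTerm_reducedGen c i⟩

instance finite_quotient_hilbOf : Module.Finite K ((Fin d → K⟦X⟧) ⧸ hilbOf x c) :=
  have ⟨_, hk⟩ := exists_X_pow_smul_mem_span (hasLeadAt_reducedGen c)
  finite_quotient_of_X_pow_smul_mem _ hk

lemma hilbOf_injective : Function.Injective (hilbOf (K := K) x) := by
  intro c c' h
  funext i p
  have hmem : reducedGen x c i - reducedGen x c' i ∈ hilbOf x c :=
    sub_mem (subset_span ⟨i, rfl⟩) (h ▸ subset_span ⟨i, rfl⟩)
  have hsupp : reducedGen x c i - reducedGen x c' i ∈ staircaseSupported K x :=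
    mem_staircaseSupported.mpr fun q hq => by
      have hq' : q ∉ staircaseAfter x i := fun h => hq (mem_staircaseAfter.mp h).1
      rw [map_sub, coeffAt_reducedGen, coeffAt_reducedGen, dif_neg hq', dif_neg hq', sub_self]
  have := congrArg (coeffAt p) (eq_zero_of_mem_staircaseSupported (LTsub_hilbOf c) hmem hsupp)
  rwa [map_sub, coeffAt_reducedGen, coeffAt_reducedGen, dif_pos p.2, dif_pos p.2,
    add_sub_add_left_eq_sub, map_zero, sub_eq_zero] at this

end Parametrisation

section Classification

variable {K : Type*} [Field K] {d : ℕ} [NeZero d] {x : Fin d → ℕ}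
  {M : Submodule K⟦X⟧ (Fin d → K⟦X⟧)}

/-- Otherwise the leading position of `stdMono d (x i) i - s ∈ M` would be a position where `s`
is nonzero, hence on the staircase. -/
lemma coeffAt_eq_zero_of_lt_pos (hLT : LTsub d M = monomialSpan K x) {i : Fin d}
    {s : Fin d → K⟦X⟧} (hs : s ∈ staircaseSupported K x) (hsM : stdMono d (x i) i - s ∈ M)
    {q : ℕ} (hq : q < pos (x i) i) : coeffAt q s = 0 := by
  set g := stdMono d (x i) i - s
  have hcoeff : ∀ p < pos (x i) i, coeffAt p g = -coeffAt p s := fun p hp => by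
    rw [map_sub, stdMono_eq_basisVec, coeffAt_basisVec, if_neg hp.ne, zero_sub]
  by_contra hqs
  have hg0 : g ≠ 0 := fun h => hqs (by simpa [h] using (hcoeff q hq).symm)
  have hlead := hasLeadAt_leadPos hg0
  have hle : leadPos d g ≤ q :=
    le_of_not_gt fun h => hqs (neg_eq_zero.mp ((hcoeff q hq).symm.trans (hlead.1 q h)))
  have hs' : coeffAt (leadPos d g) s ≠ 0 := by
    simpa [hcoeff _ (hle.trans_lt hq)] using hlead.2
  exact leadPos_notMem_staircase hLT hsM hg0
    (by_contra fun h => hs' (mem_staircaseSupported.mp hs _ h))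

lemma exists_hilbOf_eq (hLT : LTsub d M = monomialSpan K x)
    [Module.Finite K ((Fin d → K⟦X⟧) ⧸ M)] : ∃ c, hilbOf x c = M := by
  have hdec i := mem_sup.mp (mem_staircaseSupported_sup hLT (stdMono d (x i) i))
  choose s hs m hm hsm using hdec
  have hsM i : stdMono d (x i) i - s i ∈ M := by rw [← hsm i, add_sub_cancel_left]; exact hm i
  have hsupp i q (hq : q ∉ staircaseAfter x i) : coeffAt q (s i) = 0 := by
    rw [mem_staircaseAfter, not_and_or, not_lt] at hq
    rcases hq with hq | hq
    · exact mem_staircaseSupported.mp (hs i) q hq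
    · rcases hq.lt_or_eq with hq | rfl
      · exact coeffAt_eq_zero_of_lt_pos hLT (hs i) (hsM i) hq
      · exact mem_staircaseSupported.mp (hs i) _ (pos_mem_staircase_iff.not.mpr (lt_irrefl _))
  let c : ∀ i, staircaseAfter x i → K := fun i p => -coeffAt p (s i)
  have hgen i : reducedGen x c i = stdMono d (x i) i - s i := coeffAt_ext fun q => by
    rw [coeffAt_reducedGen, map_sub, stdMono_eq_basisVec, coeffAt_basisVec, sub_eq_add_neg]
    congr 1
    split_ifs with hq
    · rfl
    · rw [hsupp i q hq, neg_zero]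
  have hle : hilbOf x c ≤ M := span_le.mpr (Set.range_subset_iff.mpr fun i => hgen i ▸ hsM i)
  refine ⟨c, le_antisymm hle fun f hf => ?_⟩
  obtain ⟨t, ht, h, hh, rfl⟩ := mem_sup.mp (mem_staircaseSupported_sup (LTsub_hilbOf c) f)
  have ht0 : t = 0 := eq_zero_of_mem_staircaseSupported hLT
    (by simpa using M.sub_mem hf (hle hh)) ht
  simpa [ht0] using hh

variable (K x) in
def hilbEquiv : (∀ i, staircaseAfter x i → K) ≃
    {M : Submodule K⟦X⟧ (Fin d → K⟦X⟧) //
      Module.Finite K ((Fin d → K⟦X⟧) ⧸ M) ∧ LTsub d M = monomialSpan K x} :=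
  Equiv.ofBijective (fun c => ⟨hilbOf x c, inferInstance, LTsub_hilbOf c⟩)
    ⟨fun _ _ h => hilbOf_injective (congrArg Subtype.val h),
      fun ⟨_, hM, hLT⟩ => have := hM; (exists_hilbOf_eq hLT).imp fun _ h => Subtype.ext h⟩

end Classification

end

end Spiral

open Spiral in
/-- For every `x = (n₁,…,n_d) ∈ ℕ^d`, the set `Hilb(x)` of
`F_q[[T]]`-submodules `M` of `F = F_q[[T]]^d` with `dim_{F_q}(F/M)` finite and `LT(M)`
equal to the submodule generated by `T^{n₁}u₁,…,T^{n_d}u_d` is finite, of cardinality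
`q^{W(x)}`. -/
theorem statement19 (d : ℕ) [NeZero d] (Fq : Type*) [Field Fq] [Fintype Fq] (q : ℕ)
    (hq : Fintype.card Fq = q) (x : Fin d → ℕ) :
    {M : Submodule (PowerSeries Fq) (Fin d → PowerSeries Fq) |
        Module.Finite Fq ((Fin d → PowerSeries Fq) ⧸ M) ∧
        LTsub d M =
          Submodule.span (PowerSeries Fq) (Set.range fun i => stdMono d (x i) i)}.Finite ∧
    Nat.card {M : Submodule (PowerSeries Fq) (Fin d → PowerSeries Fq) //
        Module.Finite Fq ((Fin d → PowerSeries Fq) ⧸ M) ∧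
        LTsub d M =
          Submodule.span (PowerSeries Fq) (Set.range fun i => stdMono d (x i) i)} =
      q ^ weight x := by
  refine ⟨Set.finite_coe_iff.mp (Finite.of_equiv _ (hilbEquiv Fq x)), ?_⟩
  change Nat.card {M // _ ∧ LTsub d M = monomialSpan Fq x} = _
  rw [← Nat.card_congr (hilbEquiv Fq x), Nat.card_eq_fintype_card, Fintype.card_pi]
  simp only [Fintype.card_fun, Fintype.card_coe, hq, Finset.prod_pow_eq_pow_sum,
    sum_card_staircaseAfter]
end
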